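/- Let {Σ_N} be an arbitrary sequence of regular strategy profiles on a sequence of instances of the binary voting model. If lim_{N→∞} A(Σ_N) = 1 does NOT hold, then there exists a constant ε > 0 such that for infinitely many N the profile Σ_N is not an ε-strong Bayes Nash Equilibrium. -/

import Mathlib

/-!
If the fidelity of `Σ_N` does not tend to `1`, then `1 - A(Σ_N) ≥ δ` for infinitely many `N`.
Against such a profile the contingent agents deviate jointly to one fixed signal-dependent
strategy `β`, chosen (using `P_{hH} > P_{hL}`) so that the expected share of votes for `A` is a
constant below `μ` in state `L` and a constant above `μ` in state `H`. By Chebyshev's inequality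
the deviation reaches the informed decision with probability `1 - O(1/N)` in both states, so each
contingent agent gains at least `1 - A(Σ_N) - O(B/N) > δ/2` once `N` is large.
-/

namespace Voting

/-- The two world states: `L` (low) and `H` (high). -/
inductive WState : Type
  | L
  | H
deriving DecidableEq

instance instFintypeWState : Fintype WState :=
  ⟨{WState.L, WState.H}, by intro x; cases x <;> simp⟩

/-- The two alternatives: `A` (accept) and `R` (reject). -/
inductive Alt : Type
  | A
  | R
deriving DecidableEq

instance instFintypeAlt : Fintype Alt :=
  ⟨{Alt.A, Alt.R}, by intro x; cases x <;> simp⟩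

/-- The shared parameters of a binary voting instance. -/
structure BParams where
  /-- majority threshold -/
  μ : ℝ
  hμ0 : 0 < μ
  hμ1 : μ < 1
  /-- prior of state `L` -/
  PL : ℝ
  /-- prior of state `H` -/
  PH : ℝ
  hPL : 0 < PL
  hPH : 0 < PH
  hPsum : PL + PH = 1
  /-- `Psig s ω` : probability of signal `s` in state `ω`; `true` is the signal `h`,
  `false` is the signal `l`. -/
  Psig : Bool → WState → ℝ
  hPsig : ∀ s ω, 0 ≤ Psig s ω
  hPsigsum : ∀ ω, Psig false ω + Psig true ω = 1
  /-- positive correlation: `P_{hH} > P_{hL}` -/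
  hcorr : Psig true WState.L < Psig true WState.H
  /-- upper bound of the utility functions -/
  B : ℕ
  hB : 0 < B

/-- A binary voting instance with `N` agents. -/
structure BInstance extends BParams where
  N : ℕ
  /-- the utility function of each agent -/
  u : Fin N → WState → Alt → ℕ
  hub : ∀ n ω a, u n ω a ≤ B
  huA : ∀ n, u n WState.L Alt.A < u n WState.H Alt.A
  huR : ∀ n, u n WState.H Alt.R < u n WState.L Alt.R

/-- A (mixed) strategy profile: for each agent, the probability of voting for `A`
upon each signal. -/
abbrev Profile (I : BInstance) : Type := Fin I.N → Bool → ℝ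

/-- All coordinates of the profile are genuine probabilities. -/
def ValidProfile (I : BInstance) (sp : Profile I) : Prop :=
  ∀ n s, 0 ≤ sp n s ∧ sp n s ≤ 1

/-- Probability that agent `n` votes for `A`, conditioned on the world state `ω`. -/
noncomputable def pA (I : BInstance) (sp : Profile I) (n : Fin I.N) (ω : WState) : ℝ :=
  I.Psig false ω * sp n false + I.Psig true ω * sp n true

open Finset in
/-- `lambdaA I sp ω` : the probability that at least `μ·N` agents vote for `A`,
conditioned on the world state `ω` (conditionally on the state, the votes are independent,
agent `n` voting for `A` with probability `pA I sp n ω`). -/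
noncomputable def lambdaA (I : BInstance) (sp : Profile I) (ω : WState) : ℝ :=
  ∑ v : Fin I.N → Bool,
    if I.μ * (I.N : ℝ) ≤ ((univ.filter fun n => v n = true).card : ℝ) then
      ∏ n, (if v n = true then pA I sp n ω else 1 - pA I sp n ω)
    else 0

/-- The fidelity of a strategy profile: the probability that the informed majority
decision is reached. -/
noncomputable def fid (I : BInstance) (sp : Profile I) : ℝ :=
  I.PL * (1 - lambdaA I sp WState.L) + I.PH * lambdaA I sp WState.H

/-- The ex-ante expected utility of agent `n` under profile `sp`. -/
noncomputable def ut (I : BInstance) (sp : Profile I) (n : Fin I.N) : ℝ :=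
  I.PL * (lambdaA I sp WState.L * (I.u n WState.L Alt.A : ℝ)
      + (1 - lambdaA I sp WState.L) * (I.u n WState.L Alt.R : ℝ))
    + I.PH * (lambdaA I sp WState.H * (I.u n WState.H Alt.A : ℝ)
      + (1 - lambdaA I sp WState.H) * (I.u n WState.H Alt.R : ℝ))

/-- A friendly agent prefers `A` in both states. -/
def Friendly (I : BInstance) (n : Fin I.N) : Prop :=
  ∀ ω, I.u n ω Alt.R < I.u n ω Alt.A

/-- An unfriendly agent prefers `R` in both states. -/
def Unfriendly (I : BInstance) (n : Fin I.N) : Prop :=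
  ∀ ω, I.u n ω Alt.A < I.u n ω Alt.R

/-- A contingent agent prefers `A` in state `H` and `R` in state `L`. -/
def Contingent (I : BInstance) (n : Fin I.N) : Prop :=
  I.u n WState.H Alt.R < I.u n WState.H Alt.A ∧ I.u n WState.L Alt.A < I.u n WState.L Alt.R

/-- A profile is regular if every friendly agent always votes for `A` and every
unfriendly agent always votes for `R`. -/
def Regular (I : BInstance) (sp : Profile I) : Prop :=
  (∀ n, Friendly I n → ∀ s, sp n s = 1) ∧ (∀ n, Unfriendly I n → ∀ s, sp n s = 0)

/-- `ε`-strong Bayes Nash Equilibrium: no coalition `D` can deviate so that no member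
is worse off and some member gains more than `ε`. -/
def IsEpsBNE (I : BInstance) (sp : Profile I) (ε : ℝ) : Prop :=
  ¬ ∃ (D : Set (Fin I.N)) (sp' : Profile I),
      ValidProfile I sp' ∧
      (∀ n, n ∉ D → sp' n = sp n) ∧
      (∀ n ∈ D, ut I sp n ≤ ut I sp' n) ∧
      (∃ n ∈ D, ut I sp n + ε < ut I sp' n)

/-- Number of friendly agents. -/
noncomputable def friendlyCount (I : BInstance) : ℕ := {n | Friendly I n}.ncard

/-- Number of unfriendly agents. -/
noncomputable def unfriendlyCount (I : BInstance) : ℕ := {n | Unfriendly I n}.ncard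

/-- Number of contingent agents. -/
noncomputable def contingentCount (I : BInstance) : ℕ := {n | Contingent I n}.ncard

/-- A sequence of binary voting instances sharing the same parameters, in which the
instance indexed by `N` has `N` agents. -/
structure BSeq where
  params : BParams
  inst : ℕ → BInstance
  hN : ∀ N, (inst N).N = N
  hshare : ∀ N, (inst N).toBParams = params

/-- A sequence of binary voting instances with fixed approximate fractions
`(αF, αU, αC)` of friendly, unfriendly and contingent agents. -/
structure BSeqFrac extends BSeq where
  αF : ℝ
  αU : ℝ
  αC : ℝ
  hαF0 : 0 ≤ αF
  hαU0 : 0 ≤ αU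
  hαC0 : 0 ≤ αC
  hαsum : αF + αU + αC = 1
  hαFμ : αF < params.μ
  hαUμ : αU < 1 - params.μ
  hNF : ∀ N : ℕ, friendlyCount (inst N) = ⌊αF * (N : ℝ)⌋₊
  hNU : ∀ N : ℕ, unfriendlyCount (inst N) = ⌊αU * (N : ℝ)⌋₊
  hNC : ∀ N : ℕ, contingentCount (inst N) = N - ⌊αF * (N : ℝ)⌋₊ - ⌊αU * (N : ℝ)⌋₊

open Finset Filter Topology

section Bernoulli

variable {ι : Type*} [Fintype ι]

noncomputable def bernoulliWeight (p : ι → ℝ) (v : ι → Bool) : ℝ :=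
  ∏ i, if v i = true then p i else 1 - p i

noncomputable def trueCount (v : ι → Bool) : ℝ :=
  ((univ.filter fun i => v i = true).card : ℝ)

lemma trueCount_eq_sum (v : ι → Bool) :
    trueCount v = ∑ i, if v i = true then (1 : ℝ) else 0 :=
  natCast_card_filter _ _

lemma bernoulliWeight_nonneg {p : ι → ℝ} (hp : ∀ i, 0 ≤ p i ∧ p i ≤ 1) (v : ι → Bool) :
    0 ≤ bernoulliWeight p v :=
  prod_nonneg fun i _ => by split_ifs <;> linarith [hp i]

variable [DecidableEq ι]

lemma sum_bernoulliWeight_mul_prod_indicator (p : ι → ℝ) (T : Finset ι) :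
    ∑ v : ι → Bool, bernoulliWeight p v * ∏ i ∈ T, (if v i = true then (1 : ℝ) else 0) =
      ∏ i ∈ T, p i := by
  set F : ι → Bool → ℝ := fun i b => if b = true then p i else if i ∈ T then 0 else 1 - p i
  have hpoint : ∀ v : ι → Bool,
      bernoulliWeight p v * ∏ i ∈ T, (if v i = true then (1 : ℝ) else 0) = ∏ i, F i (v i) := by
    intro v
    rw [bernoulliWeight, ← Fintype.prod_ite_mem T, ← prod_mul_distrib]
    exact prod_congr rfl fun i _ => by by_cases hT : i ∈ T <;> cases v i <;> simp [F, hT]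
  rw [sum_congr rfl fun v _ => hpoint v, ← Fintype.prod_sum, ← Fintype.prod_ite_mem T]
  exact prod_congr rfl fun i _ => by by_cases hT : i ∈ T <;> simp [F, hT]

lemma sum_bernoulliWeight (p : ι → ℝ) : ∑ v : ι → Bool, bernoulliWeight p v = 1 := by
  simpa using sum_bernoulliWeight_mul_prod_indicator p ∅

lemma sum_bernoulliWeight_mul_trueCount (p : ι → ℝ) :
    ∑ v : ι → Bool, bernoulliWeight p v * trueCount v = ∑ i, p i := by
  simp_rw [trueCount_eq_sum, mul_sum]
  rw [sum_comm]
  refine sum_congr rfl fun i _ => ?_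
  simpa using sum_bernoulliWeight_mul_prod_indicator p {i}

lemma sum_bernoulliWeight_mul_trueCount_sq (p : ι → ℝ) :
    ∑ v : ι → Bool, bernoulliWeight p v * trueCount v ^ 2 =
      (∑ i, p i) ^ 2 + ∑ i, p i * (1 - p i) := by
  have hpair : ∀ (v : ι → Bool) (i j : ι),
      (if v i = true then (1 : ℝ) else 0) * (if v j = true then 1 else 0) =
        ∏ m ∈ {i, j}, if v m = true then (1 : ℝ) else 0 := by
    intro v i j
    rcases eq_or_ne i j with rfl | hij
    · by_cases hv : v i = true <;> simp [hv]
    · rw [prod_pair hij]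
  have hmoment : ∀ i j : ι,
      ∏ m ∈ {i, j}, p m = p i * p j + if i = j then p i * (1 - p i) else 0 := by
    intro i j
    rcases eq_or_ne i j with rfl | hij
    · rw [pair_eq_singleton, prod_singleton, if_pos rfl]; ring
    · simp [prod_pair hij, hij]
  simp_rw [trueCount_eq_sum, sq, sum_mul_sum, mul_sum, hpair]
  rw [sum_comm]
  simp_rw [sum_comm (γ := ι → Bool), sum_bernoulliWeight_mul_prod_indicator, hmoment,
    sum_add_distrib, sum_ite_eq, mem_univ, if_true]

lemma sum_bernoulliWeight_mul_sub_sq (p : ι → ℝ) :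
    ∑ v : ι → Bool, bernoulliWeight p v * (trueCount v - ∑ i, p i) ^ 2 =
      ∑ i, p i * (1 - p i) := by
  have hexpand : ∀ v : ι → Bool, bernoulliWeight p v * (trueCount v - ∑ i, p i) ^ 2 =
      bernoulliWeight p v * trueCount v ^ 2 - 2 * (∑ i, p i) * (bernoulliWeight p v * trueCount v)
        + (∑ i, p i) ^ 2 * bernoulliWeight p v := fun v => by ring
  rw [sum_congr rfl fun v _ => hexpand v, sum_add_distrib, sum_sub_distrib, ← mul_sum, ← mul_sum,
    sum_bernoulliWeight_mul_trueCount_sq, sum_bernoulliWeight_mul_trueCount, sum_bernoulliWeight]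
  ring

/-- Chebyshev's inequality for the number of successes of independent Bernoulli trials. -/
lemma sum_bernoulliWeight_ite_le {p : ι → ℝ} (hp : ∀ i, 0 ≤ p i ∧ p i ≤ 1)
    (P : (ι → Bool) → Prop) [DecidablePred P] {a : ℝ} (ha : 0 < a)
    (hP : ∀ v, P v → a ≤ |trueCount v - ∑ i, p i|) :
    ∑ v : ι → Bool, (if P v then bernoulliWeight p v else 0) ≤ (∑ i, p i * (1 - p i)) / a ^ 2 := by
  rw [le_div_iff₀ (by positivity), sum_mul, ← sum_bernoulliWeight_mul_sub_sq]
  refine sum_le_sum fun v _ => ?_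
  split_ifs with hv
  · rw [← sq_abs (trueCount v - _)]
    exact mul_le_mul_of_nonneg_left (pow_le_pow_left₀ ha.le (hP v hv) 2)
      (bernoulliWeight_nonneg hp v)
  · rw [zero_mul]
    exact mul_nonneg (bernoulliWeight_nonneg hp v) (sq_nonneg _)

end Bernoulli

noncomputable def voteProb (P : BParams) (β : Bool → ℝ) (ω : WState) : ℝ :=
  P.Psig false ω * β false + P.Psig true ω * β true

lemma voteProb_mem_Icc (P : BParams) {β : Bool → ℝ} (hβ : ∀ s, 0 ≤ β s ∧ β s ≤ 1)
    (ω : WState) : 0 ≤ voteProb P β ω ∧ voteProb P β ω ≤ 1 := by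
  have hf := mul_le_of_le_one_right (P.hPsig false ω) (hβ false).2
  have ht := mul_le_of_le_one_right (P.hPsig true ω) (hβ true).2
  refine ⟨add_nonneg (mul_nonneg (P.hPsig false ω) (hβ false).1)
    (mul_nonneg (P.hPsig true ω) (hβ true).1), ?_⟩
  unfold voteProb
  linarith [P.hPsigsum ω]

section Instance

variable (I : BInstance) {sp sp' : Profile I}

lemma pA_eq_voteProb (sp : Profile I) (n : Fin I.N) (ω : WState) :
    pA I sp n ω = voteProb I.toBParams (sp n) ω :=
  rfl

lemma pA_mem_Icc (hsp : ValidProfile I sp) (n : Fin I.N) (ω : WState) :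
    0 ≤ pA I sp n ω ∧ pA I sp n ω ≤ 1 :=
  voteProb_mem_Icc _ (hsp n) ω

lemma sum_pA_mul_one_sub_le (hsp : ValidProfile I sp) (ω : WState) :
    ∑ n, pA I sp n ω * (1 - pA I sp n ω) ≤ I.N := by
  have hle : ∀ n, pA I sp n ω * (1 - pA I sp n ω) ≤ 1 := fun n => by
    nlinarith [pA_mem_Icc I hsp n ω]
  simpa using sum_le_sum fun n (_ : n ∈ univ) => hle n

lemma lambdaA_eq_sum (sp : Profile I) (ω : WState) :
    lambdaA I sp ω = ∑ v : Fin I.N → Bool,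
      if I.μ * I.N ≤ trueCount v then bernoulliWeight (fun n => pA I sp n ω) v else 0 :=
  rfl

lemma one_sub_lambdaA_eq_sum (sp : Profile I) (ω : WState) :
    1 - lambdaA I sp ω = ∑ v : Fin I.N → Bool,
      if ¬ I.μ * I.N ≤ trueCount v then bernoulliWeight (fun n => pA I sp n ω) v else 0 := by
  rw [lambdaA_eq_sum, ← sum_bernoulliWeight (fun n => pA I sp n ω), ← sum_sub_distrib]
  exact sum_congr rfl fun v _ => by split_ifs <;> simp

lemma lambdaA_nonneg (hsp : ValidProfile I sp) (ω : WState) : 0 ≤ lambdaA I sp ω :=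
  sum_nonneg fun v _ => ite_nonneg (bernoulliWeight_nonneg (pA_mem_Icc I hsp · ω) v) le_rfl

lemma lambdaA_le_one (hsp : ValidProfile I sp) (ω : WState) : lambdaA I sp ω ≤ 1 := by
  have h : 0 ≤ 1 - lambdaA I sp ω := by
    rw [one_sub_lambdaA_eq_sum]
    exact sum_nonneg fun v _ => ite_nonneg (bernoulliWeight_nonneg (pA_mem_Icc I hsp · ω) v) le_rfl
  linarith

lemma lambdaA_le_of_sum_pA_add_le (hsp : ValidProfile I sp) {ω : WState} {a : ℝ} (ha : 0 < a)
    (h : ∑ n, pA I sp n ω + a ≤ I.μ * I.N) : lambdaA I sp ω ≤ I.N / a ^ 2 := by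
  rw [lambdaA_eq_sum]
  refine (sum_bernoulliWeight_ite_le (pA_mem_Icc I hsp · ω) _ ha fun v hv => ?_).trans
    (by gcongr; exact sum_pA_mul_one_sub_le I hsp ω)
  rw [abs_of_nonneg] <;> linarith

lemma one_sub_div_le_lambdaA_of_le_sum_pA (hsp : ValidProfile I sp) {ω : WState} {a : ℝ}
    (ha : 0 < a) (h : I.μ * I.N + a ≤ ∑ n, pA I sp n ω) : 1 - I.N / a ^ 2 ≤ lambdaA I sp ω := by
  have htail : 1 - lambdaA I sp ω ≤ I.N / a ^ 2 := by
    rw [one_sub_lambdaA_eq_sum]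
    refine (sum_bernoulliWeight_ite_le (pA_mem_Icc I hsp · ω) _ ha fun v hv => ?_).trans
      (by gcongr; exact sum_pA_mul_one_sub_le I hsp ω)
    rw [abs_of_nonpos] <;> linarith
  linarith

lemma fid_le_one (hsp : ValidProfile I sp) : fid I sp ≤ 1 := by
  have hL := lambdaA_nonneg I hsp WState.L
  have hH := lambdaA_le_one I hsp WState.H
  have hPL := I.hPL
  have hPH := I.hPH
  unfold fid
  nlinarith [I.hPsum]

lemma one_sub_fid_sub_le_ut_sub (hsp : ValidProfile I sp) (hsp' : ValidProfile I sp')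
    {n : Fin I.N} (hn : Contingent I n) {E : ℝ} (hL : lambdaA I sp' WState.L ≤ E)
    (hH : 1 - E ≤ lambdaA I sp' WState.H) :
    1 - fid I sp - I.B * E ≤ ut I sp' n - ut I sp n := by
  set gL : ℝ := I.u n WState.L Alt.R - I.u n WState.L Alt.A
  set gH : ℝ := I.u n WState.H Alt.A - I.u n WState.H Alt.R
  have hgL : 1 ≤ gL ∧ gL ≤ I.B := by
    have h1 : (I.u n WState.L Alt.A : ℝ) + 1 ≤ I.u n WState.L Alt.R := by exact_mod_cast hn.2
    have h2 : (I.u n WState.L Alt.R : ℝ) ≤ I.B := by exact_mod_cast I.hub n WState.L Alt.R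
    exact ⟨by linarith, by linarith [(I.u n WState.L Alt.A).cast_nonneg (α := ℝ)]⟩
  have hgH : 1 ≤ gH ∧ gH ≤ I.B := by
    have h1 : (I.u n WState.H Alt.R : ℝ) + 1 ≤ I.u n WState.H Alt.A := by exact_mod_cast hn.1
    have h2 : (I.u n WState.H Alt.A : ℝ) ≤ I.B := by exact_mod_cast I.hub n WState.H Alt.A
    exact ⟨by linarith, by linarith [(I.u n WState.H Alt.R).cast_nonneg (α := ℝ)]⟩
  have hlamL := lambdaA_nonneg I hsp WState.L
  have hlamH := lambdaA_le_one I hsp WState.H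
  have hlamL' := lambdaA_nonneg I hsp' WState.L
  have hlamH' := lambdaA_le_one I hsp' WState.H
  have hgainL : lambdaA I sp WState.L - E * I.B ≤
      (lambdaA I sp WState.L - lambdaA I sp' WState.L) * gL := by nlinarith
  have hgainH : (1 - lambdaA I sp WState.H) - E * I.B ≤
      (lambdaA I sp' WState.H - lambdaA I sp WState.H) * gH := by nlinarith
  calc 1 - fid I sp - I.B * E
      = I.PL * (lambdaA I sp WState.L - E * I.B)
        + I.PH * ((1 - lambdaA I sp WState.H) - E * I.B) := by
        unfold fid; linear_combination (I.B * E - 1) * I.hPsum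
    _ ≤ I.PL * ((lambdaA I sp WState.L - lambdaA I sp' WState.L) * gL)
        + I.PH * ((lambdaA I sp' WState.H - lambdaA I sp WState.H) * gH) := by
        gcongr
        exacts [I.hPL.le, I.hPH.le]
    _ = ut I sp' n - ut I sp n := by unfold ut; ring

end Instance

section Deviation

variable {I : BInstance} {n : Fin I.N}

lemma Friendly.not_unfriendly (h : Friendly I n) : ¬ Unfriendly I n := fun h' =>
  (h WState.L).not_gt (h' WState.L)

lemma Friendly.not_contingent (h : Friendly I n) : ¬ Contingent I n := fun h' =>
  (h WState.L).not_gt h'.2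

lemma Unfriendly.not_contingent (h : Unfriendly I n) : ¬ Contingent I n := fun h' =>
  (h WState.H).not_gt h'.1

variable (I)

lemma friendly_or_unfriendly_or_contingent
    (hcount : friendlyCount I + unfriendlyCount I + contingentCount I = I.N) (n : Fin I.N) :
    Friendly I n ∨ Unfriendly I n ∨ Contingent I n := by
  have hFU : Disjoint {n | Friendly I n} {n | Unfriendly I n} :=
    Set.disjoint_left.2 fun _ hF => hF.not_unfriendly
  have hFUC : Disjoint ({n | Friendly I n} ∪ {n | Unfriendly I n}) {n | Contingent I n} :=
    Set.disjoint_union_left.2 ⟨Set.disjoint_left.2 fun _ hF => hF.not_contingent,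
      Set.disjoint_left.2 fun _ hU => hU.not_contingent⟩
  have hcover : {n | Friendly I n} ∪ {n | Unfriendly I n} ∪ {n | Contingent I n} = Set.univ := by
    refine Set.eq_of_subset_of_ncard_le (Set.subset_univ _) ?_
    rw [Set.ncard_union_eq hFUC, Set.ncard_union_eq hFU, Set.ncard_univ, Nat.card_eq_fintype_card,
      Fintype.card_fin]
    exact hcount.ge
  simpa [or_assoc] using hcover.ge (Set.mem_univ n)

open Classical in
noncomputable def contingentDeviation (sp : Profile I) (β : Bool → ℝ) : Profile I :=
  fun n => if Contingent I n then β else sp n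

variable {I} {sp : Profile I} {β : Bool → ℝ}

lemma contingentDeviation_of_contingent (hn : Contingent I n) :
    contingentDeviation I sp β n = β :=
  if_pos hn

lemma contingentDeviation_of_not_contingent (hn : ¬ Contingent I n) :
    contingentDeviation I sp β n = sp n :=
  if_neg hn

lemma validProfile_contingentDeviation (hsp : ValidProfile I sp)
    (hβ : ∀ s, 0 ≤ β s ∧ β s ≤ 1) : ValidProfile I (contingentDeviation I sp β) := by
  intro n
  by_cases hn : Contingent I n
  · rw [contingentDeviation_of_contingent hn]; exact hβ
  · rw [contingentDeviation_of_not_contingent hn]; exact hsp n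

lemma sum_pA_contingentDeviation (hreg : Regular I sp)
    (hcount : friendlyCount I + unfriendlyCount I + contingentCount I = I.N) (ω : WState) :
    ∑ n, pA I (contingentDeviation I sp β) n ω =
      friendlyCount I + voteProb I.toBParams β ω * contingentCount I := by
  classical
  have hpoint : ∀ n, pA I (contingentDeviation I sp β) n ω =
      (if Friendly I n then 1 else 0) +
        voteProb I.toBParams β ω * if Contingent I n then 1 else 0 := by
    intro n
    rcases friendly_or_unfriendly_or_contingent I hcount n with hF | hU | hC
    · simp [pA, contingentDeviation_of_not_contingent hF.not_contingent, hreg.1 n hF, hF,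
        hF.not_contingent, I.hPsigsum ω]
    · have hF : ¬ Friendly I n := fun hF => hF.not_unfriendly hU
      simp [pA, contingentDeviation_of_not_contingent hU.not_contingent, hreg.2 n hU, hF,
        hU.not_contingent]
    · have hF : ¬ Friendly I n := fun hF => hF.not_contingent hC
      simp [pA_eq_voteProb, contingentDeviation_of_contingent hC, hF, hC]
  simp_rw [hpoint, sum_add_distrib, ← mul_sum, sum_boole, friendlyCount, contingentCount,
    Set.ncard_eq_toFinset_card', Set.toFinset_ofPred]

lemma not_isEpsBNE_of_coalition_gain {sp' : Profile I} {ε : ℝ} (hε : 0 ≤ ε) (D : Set (Fin I.N))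
    (hsp' : ValidProfile I sp') (hout : ∀ n ∉ D, sp' n = sp n) (hD : D.Nonempty)
    (hgain : ∀ n ∈ D, ut I sp n + ε < ut I sp' n) : ¬ IsEpsBNE I sp ε := fun hBNE =>
  let ⟨n₀, hn₀⟩ := hD
  hBNE ⟨D, sp', hsp', hout, fun n hn => by linarith [hgain n hn], n₀, hn₀, hgain n₀ hn₀⟩

end Deviation

lemma BParams.exists_voteProb_lt_lt (P : BParams) {t : ℝ} (ht0 : 0 < t) (ht1 : t < 1) :
    ∃ β : Bool → ℝ, (∀ s, 0 ≤ β s ∧ β s ≤ 1) ∧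
      voteProb P β WState.L < t ∧ t < voteProb P β WState.H := by
  set d := min t (1 - t)
  set x := (P.Psig true WState.L + P.Psig true WState.H) / 2 with hx
  have hd : 0 < d := lt_min ht0 (by linarith)
  have hdt : d ≤ t := min_le_left _ _
  have hdt' : d ≤ 1 - t := min_le_right _ _
  have hxL : P.Psig true WState.L < x := by rw [hx]; linarith [P.hcorr]
  have hxH : x < P.Psig true WState.H := by rw [hx]; linarith [P.hcorr]
  have hx0 : 0 ≤ x := by linarith [P.hPsig true WState.L]
  have hx1 : x ≤ 1 := by linarith [P.hPsigsum WState.H, P.hPsig false WState.H]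
  -- signal `h` adds `d` to the vote probability; the offset `d * x` centres the states around `t`
  have hvote : ∀ ω, voteProb P (fun s => if s then t - d * x + d else t - d * x) ω =
      t + d * (P.Psig true ω - x) := fun ω => by
    simp only [voteProb, Bool.false_eq_true, if_false, if_true]
    linear_combination (t - d * x) * P.hPsigsum ω
  refine ⟨fun s => if s then t - d * x + d else t - d * x, fun s => ?_, ?_, ?_⟩
  · have hdx : d * x ≤ d := mul_le_of_le_one_right hd.le hx1
    cases s <;> simp only [Bool.false_eq_true, if_false, if_true] <;>
      constructor <;> nlinarith [mul_nonneg hd.le hx0]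
  · rw [hvote]; nlinarith [mul_pos hd (sub_pos.2 hxL)]
  · rw [hvote]; nlinarith [mul_pos hd (sub_pos.2 hxH)]

namespace BSeqFrac

variable (S : BSeqFrac)

lemma αC_pos : 0 < S.αC := by
  linarith [S.hαFμ, S.hαUμ, S.hαsum]

lemma inst_B (N : ℕ) : (S.inst N).B = S.params.B := by
  rw [S.hshare]

lemma count_sum (N : ℕ) :
    friendlyCount (S.inst N) + unfriendlyCount (S.inst N) + contingentCount (S.inst N) =
      (S.inst N).N := by
  have hfloor : ⌊S.αF * N⌋₊ + ⌊S.αU * N⌋₊ ≤ N := by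
    have hF := Nat.floor_le (mul_nonneg S.hαF0 N.cast_nonneg)
    have hU := Nat.floor_le (mul_nonneg S.hαU0 N.cast_nonneg)
    have : (⌊S.αF * N⌋₊ + ⌊S.αU * N⌋₊ : ℝ) ≤ N := by nlinarith [S.hαsum, S.hαC0]
    exact_mod_cast this
  rw [S.hNF, S.hNU, S.hNC, S.hN]
  omega

lemma friendlyCount_le (N : ℕ) : (friendlyCount (S.inst N) : ℝ) ≤ S.αF * N := by
  rw [S.hNF]
  exact Nat.floor_le (mul_nonneg S.hαF0 N.cast_nonneg)

lemma sub_one_le_friendlyCount (N : ℕ) : S.αF * N - 1 ≤ friendlyCount (S.inst N) := by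
  rw [S.hNF]
  linarith [Nat.lt_floor_add_one (S.αF * N)]

lemma contingentCount_mem_Icc (N : ℕ) :
    S.αC * N ≤ contingentCount (S.inst N) ∧ (contingentCount (S.inst N) : ℝ) ≤ S.αC * N + 2 := by
  have hsum : (friendlyCount (S.inst N) + unfriendlyCount (S.inst N) + contingentCount (S.inst N)
      : ℝ) = N := by exact_mod_cast (S.count_sum N).trans (S.hN N)
  have hU := Nat.floor_le (mul_nonneg S.hαU0 N.cast_nonneg)
  have hU' := Nat.lt_floor_add_one (S.αU * N)
  rw [← S.hNU] at hU hU'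
  constructor <;> nlinarith [S.friendlyCount_le N, S.sub_one_le_friendlyCount N, S.hαsum]

lemma exists_separating_strategy :
    ∃ β : Bool → ℝ, (∀ s, 0 ≤ β s ∧ β s ≤ 1) ∧
      S.αF + S.αC * voteProb S.params β WState.L < S.params.μ ∧
      S.params.μ < S.αF + S.αC * voteProb S.params β WState.H := by
  have hαC := S.αC_pos
  obtain ⟨β, hβ, hL, hH⟩ := S.params.exists_voteProb_lt_lt (t := (S.params.μ - S.αF) / S.αC)
    (div_pos (by linarith [S.hαFμ]) hαC)
    ((div_lt_one hαC).2 (by linarith [S.hαUμ, S.hαsum]))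
  rw [lt_div_iff₀ hαC] at hL
  rw [div_lt_iff₀ hαC] at hH
  exact ⟨β, hβ, by linarith, by linarith⟩

lemma eventually_contingent_nonempty :
    ∀ᶠ N in atTop, {n | Contingent (S.inst N) n}.Nonempty := by
  filter_upwards [eventually_ge_atTop 1] with N hN
  refine Set.nonempty_of_ncard_ne_zero fun h0 => ?_
  have hpos : 0 < S.αC * N := mul_pos S.αC_pos (by exact_mod_cast hN)
  have := (S.contingentCount_mem_Icc N).1
  rw [contingentCount, h0, Nat.cast_zero] at this
  linarith

variable {S} {sp : ∀ N, Profile (S.inst N)} {β : Bool → ℝ}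

lemma tendsto_lambdaA_contingentDeviation_L (hsp : ∀ N, ValidProfile (S.inst N) (sp N))
    (hreg : ∀ N, Regular (S.inst N) (sp N)) (hβ : ∀ s, 0 ≤ β s ∧ β s ≤ 1)
    (hgap : S.αF + S.αC * voteProb S.params β WState.L < S.params.μ) :
    Tendsto (fun N => lambdaA (S.inst N) (contingentDeviation (S.inst N) (sp N) β) WState.L)
      atTop (𝓝 0) := by
  set g := S.params.μ - (S.αF + S.αC * voteProb S.params β WState.L)
  have hg : 0 < g := sub_pos.2 hgap
  have hq := voteProb_mem_Icc S.params hβ WState.L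
  refine tendsto_of_tendsto_of_tendsto_of_le_of_le' tendsto_const_nhds
    (tendsto_const_div_atTop_nhds_zero_nat (4 / g ^ 2))
    (Eventually.of_forall fun N => lambdaA_nonneg _ (validProfile_contingentDeviation (hsp N) hβ) _)
    ?_
  filter_upwards [eventually_ge_atTop ⌈4 / g⌉₊, eventually_ge_atTop 1] with N hNg hN1
  have hN : (0 : ℝ) < N := by exact_mod_cast hN1
  have hgN : 4 ≤ g * N := by
    rw [← div_le_iff₀' hg]; exact (Nat.le_ceil _).trans (by exact_mod_cast hNg)
  have hC := S.contingentCount_mem_Icc N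
  have hmean : ∑ n, pA (S.inst N) (contingentDeviation (S.inst N) (sp N) β) n WState.L
      + g * N / 2 ≤ (S.inst N).μ * (S.inst N).N := by
    rw [sum_pA_contingentDeviation (hreg N) (S.count_sum N), S.hshare, S.hN]
    nlinarith [S.friendlyCount_le N]
  calc _ ≤ ((S.inst N).N : ℝ) / (g * N / 2) ^ 2 :=
        lambdaA_le_of_sum_pA_add_le _ (validProfile_contingentDeviation (hsp N) hβ) (by positivity)
          hmean
    _ = 4 / g ^ 2 / N := by rw [S.hN]; field_simp; ring

lemma tendsto_lambdaA_contingentDeviation_H (hsp : ∀ N, ValidProfile (S.inst N) (sp N))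
    (hreg : ∀ N, Regular (S.inst N) (sp N)) (hβ : ∀ s, 0 ≤ β s ∧ β s ≤ 1)
    (hgap : S.params.μ < S.αF + S.αC * voteProb S.params β WState.H) :
    Tendsto (fun N => lambdaA (S.inst N) (contingentDeviation (S.inst N) (sp N) β) WState.H)
      atTop (𝓝 1) := by
  set g := S.αF + S.αC * voteProb S.params β WState.H - S.params.μ
  have hg : 0 < g := sub_pos.2 hgap
  have hq := voteProb_mem_Icc S.params hβ WState.H
  have hlim : Tendsto (fun N : ℕ => 1 - 4 / g ^ 2 / N) atTop (𝓝 1) := by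
    simpa using (tendsto_const_div_atTop_nhds_zero_nat (4 / g ^ 2)).const_sub (1 : ℝ)
  refine tendsto_of_tendsto_of_tendsto_of_le_of_le' hlim tendsto_const_nhds ?_
    (Eventually.of_forall fun N => lambdaA_le_one _ (validProfile_contingentDeviation (hsp N) hβ) _)
  filter_upwards [eventually_ge_atTop ⌈2 / g⌉₊, eventually_ge_atTop 1] with N hNg hN1
  have hN : (0 : ℝ) < N := by exact_mod_cast hN1
  have hgN : 2 ≤ g * N := by
    rw [← div_le_iff₀' hg]; exact (Nat.le_ceil _).trans (by exact_mod_cast hNg)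
  have hC := S.contingentCount_mem_Icc N
  have hmean : (S.inst N).μ * (S.inst N).N + g * N / 2 ≤
      ∑ n, pA (S.inst N) (contingentDeviation (S.inst N) (sp N) β) n WState.H := by
    rw [sum_pA_contingentDeviation (hreg N) (S.count_sum N), S.hshare, S.hN]
    nlinarith [S.sub_one_le_friendlyCount N]
  calc 1 - 4 / g ^ 2 / N = 1 - ((S.inst N).N : ℝ) / (g * N / 2) ^ 2 := by
        rw [S.hN]; field_simp; ring
    _ ≤ _ := one_sub_div_le_lambdaA_of_le_sum_pA _ (validProfile_contingentDeviation (hsp N) hβ)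
        (by positivity) hmean

end BSeqFrac

lemma exists_frequently_le_sub_of_not_tendsto {α : Type*} {l : Filter α} {f : α → ℝ} {a : ℝ}
    (hf : ∀ x, f x ≤ a) (h : ¬ Tendsto f l (𝓝 a)) : ∃ δ > 0, ∃ᶠ x in l, δ ≤ a - f x := by
  simpa only [Metric.tendsto_nhds, not_forall, not_eventually, exists_prop, not_lt,
    Real.dist_eq, abs_sub_comm (f _), fun x => abs_of_nonneg (sub_nonneg.2 (hf x))] using h

/-- Theorem 2, second part. For a sequence of regular strategy profiles
on a sequence of instances, if the fidelities do not converge to `1`, then for some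
constant `ε > 0` the profile `Σ_N` fails to be an `ε`-strong BNE for infinitely many `N`. -/
theorem low_fidelity_implies_not_eps_BNE (S : BSeqFrac)
    (sp : ∀ N : ℕ, Profile (S.inst N))
    (hval : ∀ N, ValidProfile (S.inst N) (sp N))
    (hreg : ∀ N, Regular (S.inst N) (sp N))
    (hfid : ¬ Filter.Tendsto (fun N => fid (S.inst N) (sp N)) Filter.atTop (nhds 1)) :
    ∃ ε : ℝ, 0 < ε ∧ ∀ m : ℕ, ∃ N : ℕ, m ≤ N ∧ ¬ IsEpsBNE (S.inst N) (sp N) ε := by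
  obtain ⟨δ, hδ, hfreq⟩ :=
    exists_frequently_le_sub_of_not_tendsto (fun N => fid_le_one _ (hval N)) hfid
  obtain ⟨β, hβ, hL, hH⟩ := S.exists_separating_strategy
  have hB : (0 : ℝ) < S.params.B := by exact_mod_cast S.params.hB
  set E := δ / (4 * S.params.B)
  have hE : 0 < E := by positivity
  have hgood := ((S.tendsto_lambdaA_contingentDeviation_L hval hreg hβ hL).eventually
    (gt_mem_nhds hE)).and (((S.tendsto_lambdaA_contingentDeviation_H hval hreg hβ hH).eventually
    (lt_mem_nhds (sub_lt_self 1 hE))).and S.eventually_contingent_nonempty)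
  refine ⟨δ / 2, half_pos hδ, fun m => ?_⟩
  obtain ⟨N, hmN, hfidN, hLN, hHN, hne⟩ := (hfreq.and_eventually hgood).forall_exists_of_atTop m
  have hdev := validProfile_contingentDeviation (hval N) hβ
  refine ⟨N, hmN, not_isEpsBNE_of_coalition_gain (half_pos hδ).le _ hdev
    (fun n hn => contingentDeviation_of_not_contingent hn) hne fun n hn => ?_⟩
  have hgain := one_sub_fid_sub_le_ut_sub _ (hval N) hdev hn hLN.le hHN.le
  have hBE : ((S.inst N).B : ℝ) * E = δ / 4 := by rw [S.inst_B]; simp only [E]; field_simp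
  linarith

end Voting
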